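/- arXiv:2511.06338 — 2 statements merged into one kernel-verified Lean document; each statement's English description precedes it below -/
import Mathlib

section
/- Let q ≥ 1 and Y, a, b, S ≥ 0 be real numbers. If Y^q ≤ a·Y^(q-1) + (b + S), then Y - b^(1/q) ≤ a + S^(1/q). -/
/- Put x = b^(1/q), y = S^(1/q). If Y > a + x + y, then x, y ≤ Y gives
b + S = x^q + y^q ≤ (x + y)·Y^(q-1), so Y^q = Y·Y^(q-1) > a·Y^(q-1) + b + S. -/

theorem Real.rpow_eq_mul_rpow_sub_one {x q : ℝ} (hx : 0 ≤ x) (hq : 1 ≤ q) :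
    x ^ q = x * x ^ (q - 1) := by
  rw [← Real.rpow_one_add' hx (by linarith), add_sub_cancel]

theorem Real.rpow_le_mul_rpow_sub_one {x Y q : ℝ} (hx : 0 ≤ x) (hxY : x ≤ Y) (hq : 1 ≤ q) :
    x ^ q ≤ x * Y ^ (q - 1) := by
  rw [Real.rpow_eq_mul_rpow_sub_one hx hq]
  exact mul_le_mul_of_nonneg_left (Real.rpow_le_rpow hx hxY (sub_nonneg.2 hq)) hx

theorem stmt_0_general (q Y a b S : ℝ) (hq : 1 ≤ q) (ha : 0 ≤ a)
    (hb : 0 ≤ b) (hS : 0 ≤ S)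
    (h : Y ^ q ≤ a * Y ^ (q - 1) + (b + S)) :
    Y - b ^ (1 / q) ≤ a + S ^ (1 / q) := by
  have hq0 : q ≠ 0 := by positivity
  have hxb : (b ^ (1 / q)) ^ q = b := by rw [one_div, Real.rpow_inv_rpow hb hq0]
  have hyS : (S ^ (1 / q)) ^ q = S := by rw [one_div, Real.rpow_inv_rpow hS hq0]
  set x := b ^ (1 / q)
  set y := S ^ (1 / q)
  have hx : 0 ≤ x := Real.rpow_nonneg hb _
  have hy : 0 ≤ y := Real.rpow_nonneg hS _
  by_contra! hlt
  have hY : a + (x + y) < Y := by linarith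
  refine h.not_gt ?_
  calc a * Y ^ (q - 1) + (b + S) = a * Y ^ (q - 1) + (x ^ q + y ^ q) := by rw [hxb, hyS]
    _ ≤ a * Y ^ (q - 1) + (x * Y ^ (q - 1) + y * Y ^ (q - 1)) := by
      gcongr
      · exact Real.rpow_le_mul_rpow_sub_one hx (by linarith) hq
      · exact Real.rpow_le_mul_rpow_sub_one hy (by linarith) hq
    _ = (a + (x + y)) * Y ^ (q - 1) := by ring
    _ < Y * Y ^ (q - 1) := mul_lt_mul_of_pos_right hY (Real.rpow_pos_of_pos (by linarith) _)
    _ = Y ^ q := (Real.rpow_eq_mul_rpow_sub_one (by linarith) hq).symm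

theorem stmt_0 (q Y a b S : ℝ) (hq : 1 ≤ q) (hY : 0 ≤ Y) (ha : 0 ≤ a)
    (hb : 0 ≤ b) (hS : 0 ≤ S)
    (h : Y ^ q ≤ a * Y ^ (q - 1) + (b + S)) :
    Y - b ^ (1 / q) ≤ a + S ^ (1 / q) :=
  stmt_0_general q Y a b S hq ha hb hS h
end

section
/- Fix 1 ≤ p < ∞, 0 < α < ∞, u ≥ 2^(1/α), and set ℓ = ⌊log₂ p⌋. For every integer n > ℓ let (Ω_i^(n))_{i ∈ I_n} be a collection of events with P(Ω_i^(n)) ≤ 2·exp(-2^n·u^α) for all i ∈ I_n, and with |I_n| ≤ 2^(2^(n+1)). Then P(⋃_{n>ℓ} ⋃_{i∈I_n} Ω_i^(n)) ≤ 17·exp(-(1/4)·p·u^α). -/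
open MeasureTheory Real ENNReal

set_option maxHeartbeats 1000000 in
theorem stmt_6 {Ω : Type*} [MeasurableSpace Ω] (μ : Measure Ω) [IsProbabilityMeasure μ]
    {ι : Type*} (p α u : ℝ) (hp : 1 ≤ p) (hα : 0 < α) (hu : (2 : ℝ) ^ (1 / α) ≤ u)
    (I : ℕ → Finset ι) (A : ℕ → ι → Set Ω)
    (hprob : ∀ n, ⌊Real.logb 2 p⌋₊ < n → ∀ i ∈ I n,
      μ (A n i) ≤ ENNReal.ofReal (2 * Real.exp (-(2 ^ n) * u ^ α)))
    (hcard : ∀ n, ⌊Real.logb 2 p⌋₊ < n → ((I n).card : ℝ) ≤ 2 ^ (2 ^ (n + 1))) :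
    μ (⋃ n, ⋃ (_ : ⌊Real.logb 2 p⌋₊ < n), ⋃ i ∈ I n, A n i)
      ≤ ENNReal.ofReal (17 * Real.exp (-(1 / 4) * p * u ^ α)) := by
  set ℓ := ⌊Real.logb 2 p⌋₊ with hℓ
  set m := ℓ + 1 with hm
  have hp0 : (0:ℝ) < p := lt_of_lt_of_le one_pos hp
  have hlog2 : Real.log 2 ≤ 3/4 := by
    have := Real.log_two_lt_d9
    linarith
  have hlog2pos : 0 < Real.log 2 := Real.log_pos one_lt_two
  have huα : (2:ℝ) ≤ u ^ α := by
    have h1 : ((2:ℝ) ^ (1/α)) ^ α ≤ u ^ α :=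
      Real.rpow_le_rpow (Real.rpow_nonneg (by norm_num) _) hu hα.le
    calc (2:ℝ) = ((2:ℝ) ^ (1/α)) ^ α := by
          rw [← Real.rpow_mul (by norm_num), one_div_mul_cancel hα.ne', Real.rpow_one]
      _ ≤ u ^ α := h1
  have huα0 : (0:ℝ) < u ^ α := lt_of_lt_of_le two_pos huα
  set β := u ^ α - 2 * Real.log 2 with hβ
  have hβ4 : u ^ α / 4 ≤ β := by
    have : 2 * Real.log 2 ≤ Real.log 2 * u ^ α := by nlinarith
    nlinarith
  have hβhalf : (1/2 : ℝ) ≤ β := by nlinarith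
  have hβpos : 0 < β := lt_of_lt_of_le (by norm_num) hβhalf
  have hpm : p ≤ (2:ℝ) ^ m := by
    have h1 : Real.logb 2 p < (m : ℝ) := by
      have := Nat.lt_succ_floor (Real.logb 2 p)
      push_cast [hm]
      exact_mod_cast this
    have h2 : p = (2:ℝ) ^ Real.logb 2 p := (Real.rpow_logb two_pos (by norm_num) hp0).symm
    calc p = (2:ℝ) ^ Real.logb 2 p := h2
      _ ≤ (2:ℝ) ^ (m:ℝ) := Real.rpow_le_rpow_of_exponent_le one_le_two h1.le
      _ = (2:ℝ) ^ m := by rw [Real.rpow_natCast]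
  -- the dominating sequence
  set g : ℕ → ℝ := fun n => 2 * Real.exp (-(2 ^ n : ℝ) * β) with hg
  have hgpos : ∀ n, 0 < g n := fun n => by positivity
  -- term bound
  have hterm : ∀ n, ℓ < n →
      μ (⋃ i ∈ I n, A n i) ≤ ENNReal.ofReal (g n) := by
    intro n hn
    have h1 : μ (⋃ i ∈ I n, A n i) ≤ ∑ i ∈ I n, μ (A n i) :=
      measure_biUnion_finset_le _ _
    have h2 : ∑ i ∈ I n, μ (A n i)
        ≤ ((I n).card : ℝ≥0∞) * ENNReal.ofReal (2 * Real.exp (-(2 ^ n) * u ^ α)) := by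
      rw [← nsmul_eq_mul]
      exact Finset.sum_le_card_nsmul _ _ _ (hprob n hn)
    have h3 : ((I n).card : ℝ≥0∞) ≤ ENNReal.ofReal ((2:ℝ) ^ (2 ^ (n+1))) := by
      rw [← ENNReal.ofReal_natCast]
      exact ENNReal.ofReal_le_ofReal (hcard n hn)
    have h4 : (2:ℝ) ^ (2 ^ (n+1)) * (2 * Real.exp (-(2 ^ n) * u ^ α)) = g n := by
      have e1 : (2:ℝ) ^ (2 ^ (n+1)) = Real.exp ((2 ^ (n+1) : ℕ) * Real.log 2) := by
        rw [Real.exp_nat_mul, Real.exp_log two_pos]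
      rw [e1, hg]
      rw [mul_comm, mul_assoc, ← Real.exp_add]
      congr 1
      push_cast
      rw [hβ]
      ring_nf
    calc μ (⋃ i ∈ I n, A n i) ≤ ((I n).card : ℝ≥0∞) * ENNReal.ofReal (2 * Real.exp (-(2 ^ n) * u ^ α)) :=
          h1.trans h2
      _ ≤ ENNReal.ofReal ((2:ℝ) ^ (2 ^ (n+1))) * ENNReal.ofReal (2 * Real.exp (-(2 ^ n) * u ^ α)) := by
          gcongr
      _ = ENNReal.ofReal ((2:ℝ) ^ (2 ^ (n+1)) * (2 * Real.exp (-(2 ^ n) * u ^ α))) := by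
          rw [← ENNReal.ofReal_mul (by positivity)]
      _ = ENNReal.ofReal (g n) := by rw [h4]
  -- geometric decay
  have hdecay : ∀ k, g (k + m) ≤ g m * (1/2) ^ k := by
    intro k
    induction k with
    | zero => simp
    | succ k ih =>
      have hstep : g (k + 1 + m) ≤ g (k + m) * (1/2) := by
        have e : g (k + 1 + m) = g (k + m) * Real.exp (-(2 ^ (k + m) : ℝ) * β) := by
          rw [hg]
          simp only []
          rw [mul_assoc, ← Real.exp_add]
          congr 2
          have : (2:ℝ) ^ (k + 1 + m) = 2 ^ (k + m) + 2 ^ (k + m) := by ring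
          rw [this]; ring
        rw [e]
        have h2km : (2:ℝ) ≤ 2 ^ (k + m) := by
          calc (2:ℝ) = 2 ^ 1 := (pow_one 2).symm
            _ ≤ 2 ^ (k + m) := pow_le_pow_right₀ one_le_two (by omega)
        have hexp : Real.exp (-(2 ^ (k + m) : ℝ) * β) ≤ 1/2 := by
          have h1 : Real.log 2 ≤ (2 ^ (k + m) : ℝ) * β := by nlinarith
          calc Real.exp (-(2 ^ (k + m) : ℝ) * β) ≤ Real.exp (-Real.log 2) := by
                apply Real.exp_le_exp.mpr; linarith
            _ = 1/2 := by rw [Real.exp_neg, Real.exp_log two_pos]; norm_num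
        calc g (k + m) * Real.exp (-(2 ^ (k + m) : ℝ) * β) ≤ g (k + m) * (1/2) := by
              exact mul_le_mul_of_nonneg_left hexp (hgpos _).le
          _ = g (k + m) * (1/2) := rfl
      calc g (k + 1 + m) ≤ g (k + m) * (1/2) := hstep
        _ ≤ g m * (1/2) ^ k * (1/2) := by
            exact mul_le_mul_of_nonneg_right ih (by norm_num)
        _ = g m * (1/2) ^ (k + 1) := by ring
  -- head bound
  have hgm : 2 * g m ≤ 17 * Real.exp (-(1/4) * p * u ^ α) := by
    have h1 : p * u ^ α / 4 ≤ (2 ^ m : ℝ) * β := by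
      have : p * (u ^ α / 4) ≤ (2:ℝ) ^ m * β := by
        apply mul_le_mul hpm hβ4 (by positivity) (by positivity)
      linarith
    have h2 : Real.exp (-(2 ^ m : ℝ) * β) ≤ Real.exp (-(1/4) * p * u ^ α) := by
      apply Real.exp_le_exp.mpr; linarith
    have := Real.exp_pos (-(1/4) * p * u ^ α)
    rw [hg]
    simp only []
    nlinarith
  -- assemble
  set f : ℕ → ℝ≥0∞ := fun n => if ℓ < n then ENNReal.ofReal (g n) else 0 with hf
  have hμ : μ (⋃ n, ⋃ (_ : ℓ < n), ⋃ i ∈ I n, A n i) ≤ ∑' n, f n := by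
    refine (measure_iUnion_le _).trans ?_
    apply ENNReal.tsum_le_tsum
    intro n
    by_cases hn : ℓ < n
    · simp only [hf, hn, if_true, Set.iUnion_true, hn]
      exact hterm n hn
    · simp [hf, hn]
  have h0 : ∀ i < m, f i = 0 := by
    intro i hi
    simp only [hf]
    rw [if_neg (by omega)]
  have hshift : ∑' n, f n = ∑' k, f (k + m) := by
    refine (Function.Injective.tsum_eq (g := fun k => k + m) (add_left_injective m) ?_).symm
    intro n hn
    simp only [Function.mem_support, ne_eq] at hn
    rcases lt_or_ge n m with h | h
    · exact absurd (h0 n h) hn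
    · exact ⟨n - m, show n - m + m = n by omega⟩
  have htail : ∑' k, f (k + m) ≤ ENNReal.ofReal (2 * g m) := by
    have hbound : ∀ k, f (k + m) ≤ ENNReal.ofReal (g m * (1/2) ^ k) := by
      intro k
      simp only [hf]
      rw [if_pos (by omega)]
      exact ENNReal.ofReal_le_ofReal (hdecay k)
    refine (ENNReal.tsum_le_tsum hbound).trans ?_
    rw [← ENNReal.ofReal_tsum_of_nonneg (fun k => by positivity)
      (by exact (summable_geometric_of_lt_one (by norm_num) (by norm_num)).mul_left _)]
    apply ENNReal.ofReal_le_ofReal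
    rw [tsum_mul_left, tsum_geometric_of_lt_one (by norm_num) (by norm_num)]
    norm_num
    linarith
  calc μ (⋃ n, ⋃ (_ : ℓ < n), ⋃ i ∈ I n, A n i) ≤ ∑' n, f n := hμ
    _ = ∑' k, f (k + m) := hshift
    _ ≤ ENNReal.ofReal (2 * g m) := htail
    _ ≤ ENNReal.ofReal (17 * Real.exp (-(1/4) * p * u ^ α)) := ENNReal.ofReal_le_ofReal hgm
end
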